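/- arXiv:1106.0150 — 6 statements merged into one kernel-verified Lean document; each statement's English description precedes it below -/
import Mathlib

section
/- Let G be a group and f a real-valued function on finite subsets of G with f(∅) = 0 satisfying f(E∩F) + f(E∪F) ≤ f(E) + f(F) for all finite E, F ⊆ G. If E, E₁, …, Eₙ are nonempty finite subsets of G and a₁, …, aₙ > 0 are rational numbers such that 1_E = ∑_{i=1}^{n} aᵢ · 1_{Eᵢ} (as functions G → ℚ), then f(E) ≤ ∑_{i=1}^{n} aᵢ · f(Eᵢ). -/
private lemma sq_lemma (p u a b : ℕ) (h : p + u = a + b) (h1 : b < u) (h2 : p < b) :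
    a^2 + b^2 < p^2 + u^2 := by nlinarith

private theorem key {G : Type*} [DecidableEq G] (f : Finset G → ℝ) (hf0 : f ∅ = 0)
    (hsub : ∀ E F : Finset G, f (E ∩ F) + f (E ∪ F) ≤ f E + f F)
    (E : Finset G) (hE : E.Nonempty) :
    ∀ (N : ℕ) (M : Multiset (Finset G)) (q : ℕ),
      Multiset.card M * (E.card^2 + 1) - (M.map (fun A => A.card^2)).sum ≤ N →
      (∀ A ∈ M, A ⊆ E) →
      (∀ g ∈ E, (M.map (fun A => if g ∈ A then (1:ℕ) else 0)).sum = q) →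
      (q : ℝ) * f E ≤ (M.map f).sum := by
  intro N
  induction N with
  | zero =>
    intro M q hμ hsubE hcov
    have hbound : (M.map (fun A => A.card^2)).sum ≤ Multiset.card M * E.card^2 := by
      have h := Multiset.sum_le_card_nsmul (M.map fun A => A.card^2) (E.card^2) (by
        intro x hx
        obtain ⟨A, hA, rfl⟩ := Multiset.mem_map.1 hx
        exact Nat.pow_le_pow_left (Finset.card_le_card (hsubE A hA)) 2)
      simpa [Multiset.card_map] using h
    have hexp : Multiset.card M * (E.card^2 + 1)
        = Multiset.card M * E.card^2 + Multiset.card M := by ring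
    have hM : M = 0 := by
      rw [← Multiset.card_eq_zero]
      omega
    obtain ⟨g, hg⟩ := hE
    have := hcov g hg
    rw [hM] at this ⊢
    simp at this ⊢
    simp [← this]
  | succ N ih =>
    intro M q hμ hsubE hcov
    by_cases hEM : E ∈ M
    · obtain ⟨M₀, rfl⟩ : ∃ M₀, M = E ::ₘ M₀ := ⟨M.erase E, (Multiset.cons_erase hEM).symm⟩
      have hq1 : 1 ≤ q := by
        obtain ⟨g, hg⟩ := hE
        have := hcov g hg
        rw [Multiset.map_cons, Multiset.sum_cons, if_pos hg] at this
        omega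
      have hcov0 : ∀ g ∈ E, (M₀.map (fun A => if g ∈ A then (1:ℕ) else 0)).sum = q - 1 := by
        intro g hg
        have := hcov g hg
        rw [Multiset.map_cons, Multiset.sum_cons, if_pos hg] at this
        omega
      have hμ0 : Multiset.card M₀ * (E.card^2+1) - (M₀.map fun A => A.card^2).sum ≤ N := by
        simp only [Multiset.card_cons, Multiset.map_cons, Multiset.sum_cons] at hμ
        have hexp : (Multiset.card M₀ + 1) * (E.card^2 + 1)
            = Multiset.card M₀ * (E.card^2+1) + E.card^2 + 1 := by ring
        omega
      have ih' := ih M₀ (q-1) hμ0 (fun A hA => hsubE A (Multiset.mem_cons_of_mem hA)) hcov0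
      rw [Multiset.map_cons, Multiset.sum_cons]
      have hcast : ((q - 1 : ℕ) : ℝ) = (q : ℝ) - 1 := by
        rw [Nat.cast_sub hq1]; norm_num
      rw [hcast] at ih'
      linarith
    · by_cases hq : q = 0
      · subst hq
        have hall : ∀ A ∈ M, A = ∅ := by
          intro A hA
          by_contra hne
          obtain ⟨g, hg⟩ := Finset.nonempty_iff_ne_empty.2 hne
          have h0 := hcov g (hsubE A hA hg)
          rw [Multiset.sum_eq_zero_iff] at h0
          have := h0 _ (Multiset.mem_map_of_mem _ hA)
          rw [if_pos hg] at this
          exact one_ne_zero this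
        have hz : (M.map f).sum = 0 := by
          apply Multiset.sum_eq_zero
          intro x hx
          obtain ⟨A, hA, rfl⟩ := Multiset.mem_map.1 hx
          rw [hall A hA, hf0]
        simp [hz]
      · have hMne : M ≠ 0 := by
          intro h0
          obtain ⟨g, hg⟩ := hE
          have := hcov g hg
          rw [h0] at this
          simp at this
          exact hq this.symm
        obtain ⟨A, hAM, hAmax⟩ : ∃ A ∈ M, ∀ B ∈ M, B.card ≤ A.card := by
          have hne : M.toFinset.Nonempty := by
            rw [Multiset.toFinset_nonempty]; exact hMne
          obtain ⟨A, hA, hmax⟩ := Finset.exists_max_image M.toFinset Finset.card hne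
          exact ⟨A, Multiset.mem_toFinset.1 hA, fun B hB => hmax B (Multiset.mem_toFinset.2 hB)⟩
        have hAE : A ⊆ E := hsubE A hAM
        have hAne : A ≠ E := fun h => hEM (h ▸ hAM)
        obtain ⟨x, hxE, hxA⟩ := Finset.exists_of_ssubset (hAE.ssubset_of_ne hAne)
        obtain ⟨B, hBM, hxB⟩ : ∃ B ∈ M.erase A, x ∈ B := by
          by_contra hc
          push_neg at hc
          have hcovx := hcov x hxE
          have hMx : M = A ::ₘ M.erase A := (Multiset.cons_erase hAM).symm
          rw [hMx, Multiset.map_cons, Multiset.sum_cons, if_neg hxA] at hcovx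
          have hz : ((M.erase A).map (fun S => if x ∈ S then (1:ℕ) else 0)).sum = 0 := by
            apply Multiset.sum_eq_zero
            intro y hy
            obtain ⟨B, hB, rfl⟩ := Multiset.mem_map.1 hy
            rw [if_neg (hc B hB)]
          omega
        have hBM' : B ∈ M := Multiset.mem_of_mem_erase hBM
        have hBE : B ⊆ E := hsubE B hBM'
        obtain ⟨y, hyA, hyB⟩ : ∃ y ∈ A, y ∉ B := by
          rw [← Finset.not_subset]
          intro hAB
          have hlt : A ⊂ B := hAB.ssubset_of_ne (by rintro rfl; exact hxA hxB)
          exact absurd (hAmax B hBM') (not_le.2 (Finset.card_lt_card hlt))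
        obtain ⟨M₀, rfl⟩ : ∃ M₀, M = A ::ₘ B ::ₘ M₀ :=
          ⟨(M.erase A).erase B, by rw [Multiset.cons_erase hBM, Multiset.cons_erase hAM]⟩
        have hcov' : ∀ g ∈ E,
            (((A ∩ B) ::ₘ (A ∪ B) ::ₘ M₀).map (fun S => if g ∈ S then (1:ℕ) else 0)).sum = q := by
          intro g hg
          have h := hcov g hg
          simp only [Multiset.map_cons, Multiset.sum_cons] at h ⊢
          by_cases h1 : g ∈ A <;> by_cases h2 : g ∈ B <;>
            simp [h1, h2, Finset.mem_inter, Finset.mem_union] at h ⊢ <;> omega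
        have hsub' : ∀ S ∈ (A ∩ B) ::ₘ (A ∪ B) ::ₘ M₀, S ⊆ E := by
          intro S hS
          rw [Multiset.mem_cons, Multiset.mem_cons] at hS
          rcases hS with rfl | rfl | hS
          · exact Finset.inter_subset_left.trans hAE
          · exact Finset.union_subset hAE hBE
          · exact hsubE S (Multiset.mem_cons_of_mem (Multiset.mem_cons_of_mem hS))
        have hμ' : Multiset.card ((A ∩ B) ::ₘ (A ∪ B) ::ₘ M₀) * (E.card^2+1)
            - (((A ∩ B) ::ₘ (A ∪ B) ::ₘ M₀).map fun S => S.card^2).sum ≤ N := by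
          have hsq : A.card^2 + B.card^2 < (A ∩ B).card^2 + (A ∪ B).card^2 := by
            apply sq_lemma
            · exact Finset.card_inter_add_card_union A B
            · exact Finset.card_lt_card
                ((Finset.ssubset_iff_of_subset Finset.subset_union_right).2
                  ⟨y, Finset.mem_union_left _ hyA, hyB⟩)
            · exact Finset.card_lt_card
                ((Finset.ssubset_iff_of_subset Finset.inter_subset_right).2
                  ⟨x, hxB, by simp [hxA]⟩)
          simp only [Multiset.card_cons, Multiset.map_cons, Multiset.sum_cons] at hμ ⊢
          omega
        have ih' := ih _ q hμ' hsub' hcov'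
        simp only [Multiset.map_cons, Multiset.sum_cons] at ih' ⊢
        have hAB := hsub A B
        linarith


private lemma map_sum_sum {ι α β : Type*} [AddCommMonoid β] (s : Finset ι)
    (m : ι → Multiset α) (g : α → β) :
    (((∑ i ∈ s, m i)).map g).sum = ∑ i ∈ s, ((m i).map g).sum := by
  classical
  induction s using Finset.cons_induction with
  | empty => simp
  | cons i s hi ih => rw [Finset.sum_cons, Finset.sum_cons, ← ih, Multiset.map_add, Multiset.sum_add]




/-- If `f` on finite subsets of `G` satisfies `f ∅ = 0` and strong
subadditivity `f(E∩F) + f(E∪F) ≤ f E + f F`, and `1_E = ∑ᵢ aᵢ · 1_{Eᵢ}` with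
positive rationals `aᵢ` and nonempty finite sets `E, Eᵢ`, then
`f E ≤ ∑ᵢ aᵢ · f (Eᵢ)`. -/
theorem stmt1 {G : Type*} [DecidableEq G] (f : Finset G → ℝ) (hf0 : f ∅ = 0)
    (hsub : ∀ E F : Finset G, f (E ∩ F) + f (E ∪ F) ≤ f E + f F)
    (n : ℕ) (E : Finset G) (Ei : Fin n → Finset G) (a : Fin n → ℚ)
    (hE : E.Nonempty) (hEi : ∀ i, (Ei i).Nonempty) (ha : ∀ i, 0 < a i)
    (hindic : ∀ g : G,
      (if g ∈ E then (1 : ℚ) else 0) = ∑ i, a i * (if g ∈ Ei i then (1 : ℚ) else 0)) :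
    f E ≤ ∑ i, (a i : ℝ) * f (Ei i) := by
  classical
  -- subsets
  have hEisub : ∀ i, Ei i ⊆ E := by
    intro i g hg
    by_contra hgE
    have h := hindic g
    rw [if_neg hgE] at h
    have hterm : a i * (if g ∈ Ei i then (1:ℚ) else 0) = 0 := by
      refine (Finset.sum_eq_zero_iff_of_nonneg ?_).1 h.symm i (Finset.mem_univ i)
      intro j _
      by_cases h : g ∈ Ei j <;> simp [h, le_of_lt (ha j)]
    rw [if_pos hg, mul_one] at hterm
    exact absurd hterm (ne_of_gt (ha i))
  -- common denominator
  set q : ℕ := ∏ i, (a i).den with hqdef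
  have hqpos : 0 < q := Finset.prod_pos fun i _ => (a i).pos
  set c : Fin n → ℕ := fun i => ∏ j ∈ Finset.univ.erase i, (a j).den with hcdef
  have hqc : ∀ i, q = (a i).den * c i := fun i =>
    (Finset.mul_prod_erase Finset.univ (fun j => (a j).den) (Finset.mem_univ i)).symm
  set p : Fin n → ℕ := fun i => (a i).num.toNat * c i with hpdef
  have hpq : ∀ i, (p i : ℚ) = a i * q := by
    intro i
    have hnum : (0:ℤ) ≤ (a i).num := Rat.num_nonneg.2 (le_of_lt (ha i))
    have hd : ((a i).den : ℚ) * a i = (a i).num := Rat.den_mul_eq_num (a i)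
    rw [hqc i]
    simp only [hpdef]
    push_cast
    have h1 : (((a i).num.toNat : ℕ) : ℚ) = ((a i).num : ℚ) := by
      exact_mod_cast congrArg (fun z : ℤ => (z : ℚ)) (Int.toNat_of_nonneg hnum)
    rw [h1, ← hd]
    ring
  -- the multiset
  set M : Multiset (Finset G) := ∑ i, Multiset.replicate (p i) (Ei i) with hMdef
  have hsubE : ∀ A ∈ M, A ⊆ E := by
    intro A hA
    rw [hMdef, Multiset.mem_sum] at hA
    obtain ⟨i, _, hAi⟩ := hA
    rw [Multiset.eq_of_mem_replicate hAi]
    exact hEisub i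
  have hcov : ∀ g ∈ E, (M.map (fun A => if g ∈ A then (1:ℕ) else 0)).sum = q := by
    intro g hg
    rw [hMdef, map_sum_sum]
    have : ∀ i, ((Multiset.replicate (p i) (Ei i)).map
        (fun A => if g ∈ A then (1:ℕ) else 0)).sum = p i * (if g ∈ Ei i then 1 else 0) := by
      intro i
      rw [Multiset.map_replicate, Multiset.sum_replicate, smul_eq_mul]
    simp only [this]
    have hq : (q : ℚ) = ∑ i, (p i : ℚ) * (if g ∈ Ei i then (1:ℚ) else 0) := by
      have h := hindic g
      rw [if_pos hg] at h
      calc (q:ℚ) = (∑ i, a i * (if g ∈ Ei i then (1:ℚ) else 0)) * q := by rw [← h, one_mul]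
        _ = ∑ i, (p i : ℚ) * (if g ∈ Ei i then (1:ℚ) else 0) := by
            rw [Finset.sum_mul]
            exact Finset.sum_congr rfl fun i _ => by rw [hpq i]; ring
    exact_mod_cast hq.symm
  have hfsum : ((M.map f).sum : ℝ) = ∑ i, (p i : ℝ) * f (Ei i) := by
    rw [hMdef, map_sum_sum]
    exact Finset.sum_congr rfl fun i _ => by
      rw [Multiset.map_replicate, Multiset.sum_replicate, nsmul_eq_mul]
  have hkey := key f hf0 hsub E hE (Multiset.card M * (E.card^2 + 1)) M q (Nat.sub_le _ _) hsubE hcov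
  rw [hfsum] at hkey
  have hqR : (0:ℝ) < q := by exact_mod_cast hqpos
  have hfinal : (q:ℝ) * ∑ i, (a i : ℝ) * f (Ei i) = ∑ i, (p i : ℝ) * f (Ei i) := by
    rw [Finset.mul_sum]
    refine Finset.sum_congr rfl fun i _ => ?_
    have : (p i : ℝ) = (a i : ℝ) * q := by exact_mod_cast congrArg (Rat.cast : ℚ → ℝ) (hpq i)
    rw [this]; ring
  refine le_of_mul_le_mul_left ?_ hqR
  rw [hfinal]
  exact hkey
end

section
/- There exists a monotone, non-negative, ℤ-invariant, subadditive function f on the nonempty finite subsets of ℤ such that lim_{n→∞} f({1,…,n})/n > inf over nonempty finite E ⊆ ℤ of f(E)/|E|. Concretely, with S = {1,2,4}, the function f(E) = min{ |E| − |F| : F ⊆ ℤ finite (possibly empty) and {p + S : p ∈ F} is a disjoint family of subsets of E } has this property; in particular f({1,…,4n}) = 3n for every n ≥ 1, while inf_E f(E)/|E| = 2/3. -/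
/-!
Write `m(E)` for the largest number of pairwise disjoint translates of `S` inside `E`, so that
`f(E) = |E| - m(E)`. Restricting a maximal packing of `F ⊇ E` to `E` loses at most `|F \ E|`
tiles, since each lost tile owns a point of `F \ E`; this is monotonicity. Adding to a maximal
packing of `E` the tiles of a maximal packing of `F` that avoid `E` loses at most `|E ∩ F|`
tiles for the same reason; this is subadditivity. As a tile has `3` points, `f(E) ≥ 2|E|/3`,
with equality at `E = S`. But disjoint translates of `{1, 2, 4}` are at least `4` apart, so
`{1, …, n}` holds only `⌊n/4⌋` of them and `f({1, …, n})/n → 3/4`.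
-/

open Finset Pointwise Filter Topology

namespace TranslatePacking

lemma card_le_card_of_pairwiseDisjoint {α ι : Type*} {t : ι → Finset α} {P : Finset ι}
    {A : Finset α} (hd : (P : Set ι).PairwiseDisjoint t) (hA : ∀ i ∈ P, ∃ a ∈ A, a ∈ t i) :
    P.card ≤ A.card :=
  card_le_card_of_forall_subsingleton (fun i a => a ∈ t i) hA fun _ _ _ hi _ hj =>
    hd.elim hi.1 hj.1 (not_disjoint_iff.mpr ⟨_, hi.2, hj.2⟩)

section Packing

variable {G : Type*} [AddGroup G] [DecidableEq G] {S E F P : Finset G}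

def IsPacking (S E P : Finset G) : Prop :=
  (∀ p ∈ P, p +ᵥ S ⊆ E) ∧ (P : Set G).PairwiseDisjoint (· +ᵥ S)

/-- For `S = ∅` every `P` is a packing and the `sSup` takes the junk value `0`. -/
noncomputable def packingNumber (S E : Finset G) : ℕ :=
  sSup {n | ∃ P, IsPacking S E P ∧ P.card = n}

noncomputable def packingDefect (S E : Finset G) : ℝ :=
  E.card - packingNumber S E

lemma isPacking_empty : IsPacking S E ∅ :=
  ⟨by simp, by simp⟩

lemma IsPacking.card_mul_card_le (h : IsPacking S E P) : P.card * S.card ≤ E.card := by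
  have hcard : (P.biUnion (· +ᵥ S)).card = P.card * S.card := by
    rw [card_biUnion h.2]
    simp only [card_vadd_finset, sum_const, smul_eq_mul]
  exact hcard ▸ card_le_card (biUnion_subset.mpr h.1)

lemma bddAbove_card_isPacking (hS : S.Nonempty) :
    BddAbove {n | ∃ P, IsPacking S E P ∧ P.card = n} := by
  refine ⟨E.card, ?_⟩
  rintro _ ⟨P, hP, rfl⟩
  exact (Nat.le_mul_of_pos_right _ hS.card_pos).trans hP.card_mul_card_le

lemma IsPacking.card_le_packingNumber (hS : S.Nonempty) (h : IsPacking S E P) :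
    P.card ≤ packingNumber S E :=
  le_csSup (bddAbove_card_isPacking hS) ⟨P, h, rfl⟩

lemma exists_isPacking_card_eq (hS : S.Nonempty) (E : Finset G) :
    ∃ P, IsPacking S E P ∧ P.card = packingNumber S E :=
  Nat.sSup_mem (s := {n | ∃ P, IsPacking S E P ∧ P.card = n}) ⟨0, ∅, isPacking_empty, rfl⟩
    (bddAbove_card_isPacking hS)

lemma packingNumber_mul_card_le (hS : S.Nonempty) (E : Finset G) :
    packingNumber S E * S.card ≤ E.card := by
  obtain ⟨P, hP, hcard⟩ := exists_isPacking_card_eq hS E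
  exact hcard ▸ hP.card_mul_card_le

lemma packingNumber_self (hS : S.Nonempty) : packingNumber S S = 1 := by
  have hzero : IsPacking S S {0} := ⟨by simp, by simp⟩
  have hone : 1 ≤ packingNumber S S := hzero.card_le_packingNumber hS
  have hle : packingNumber S S * S.card ≤ 1 * S.card := (one_mul S.card).symm ▸
    packingNumber_mul_card_le hS S
  exact le_antisymm (Nat.le_of_mul_le_mul_right hle hS.card_pos) hone

lemma IsPacking.filter_vadd_subset (h : IsPacking S F P) (E : Finset G) :
    IsPacking S E {p ∈ P | p +ᵥ S ⊆ E} :=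
  ⟨fun _ hp => (mem_filter.mp hp).2, h.2.subset (coe_subset.mpr (filter_subset _ _))⟩

lemma packingNumber_le_add_card_sdiff (hS : S.Nonempty) (E F : Finset G) :
    packingNumber S F ≤ packingNumber S E + (F \ E).card := by
  obtain ⟨P, hP, hcard⟩ := exists_isPacking_card_eq hS F
  have hinside := (hP.filter_vadd_subset E).card_le_packingNumber hS
  have houtside : {p ∈ P | ¬p +ᵥ S ⊆ E}.card ≤ (F \ E).card := by
    refine card_le_card_of_pairwiseDisjoint (hP.2.subset (coe_subset.mpr (filter_subset _ _)))
      fun p hp => ?_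
    obtain ⟨hpP, hpE⟩ := mem_filter.mp hp
    obtain ⟨a, ha, haE⟩ := not_subset.mp hpE
    exact ⟨a, mem_sdiff.mpr ⟨hP.1 p hpP ha, haE⟩, ha⟩
  have hsplit := card_filter_add_card_filter_not (s := P) (· +ᵥ S ⊆ E)
  omega

lemma packingNumber_add_packingNumber_le (hS : S.Nonempty) (E F : Finset G) :
    packingNumber S E + packingNumber S F ≤ packingNumber S (E ∪ F) + (E ∩ F).card := by
  obtain ⟨P, hP, hPcard⟩ := exists_isPacking_card_eq hS E
  obtain ⟨Q, hQ, hQcard⟩ := exists_isPacking_card_eq hS F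
  -- Keep the tiles of `Q` that avoid `E`; each discarded one lies in `F` and meets `E`.
  set Q' := {q ∈ Q | Disjoint (q +ᵥ S) E}
  have hdisj : Disjoint P Q' := by
    refine disjoint_left.mpr fun p hp hq => ?_
    obtain ⟨a, ha⟩ := hS.vadd_finset (a := p)
    exact disjoint_left.mp (mem_filter.mp hq).2 ha (hP.1 p hp ha)
  have hunion : IsPacking S (E ∪ F) (P ∪ Q') := by
    refine ⟨fun p hp => ?_, ?_⟩
    · rcases mem_union.mp hp with hp | hp
      · exact (hP.1 p hp).trans subset_union_left
      · exact (hQ.1 p (mem_filter.mp hp).1).trans subset_union_right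
    · rw [coe_union]
      refine hP.2.union (hQ.2.subset (coe_subset.mpr (filter_subset _ _))) fun p hp q hq _ => ?_
      exact disjoint_of_subset_left (hP.1 p hp) (mem_filter.mp hq).2.symm
  have hdropped : {q ∈ Q | ¬Disjoint (q +ᵥ S) E}.card ≤ (E ∩ F).card := by
    refine card_le_card_of_pairwiseDisjoint (hQ.2.subset (coe_subset.mpr (filter_subset _ _)))
      fun q hq => ?_
    obtain ⟨hqQ, hqE⟩ := mem_filter.mp hq
    obtain ⟨a, ha, haE⟩ := not_disjoint_iff.mp hqE
    exact ⟨a, mem_inter.mpr ⟨haE, hQ.1 q hqQ ha⟩, ha⟩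
  have hkept := hunion.card_le_packingNumber hS
  rw [card_union_of_disjoint hdisj] at hkept
  have hsplit : Q'.card + {q ∈ Q | ¬Disjoint (q +ᵥ S) E}.card = Q.card :=
    card_filter_add_card_filter_not _
  omega

lemma IsPacking.vadd (h : IsPacking S E P) (g : G) : IsPacking S (g +ᵥ E) (g +ᵥ P) := by
  refine ⟨fun q hq => ?_, ?_⟩
  · obtain ⟨p, hp, rfl⟩ := mem_vadd_finset.mp hq
    rw [vadd_eq_add, add_vadd]
    exact vadd_finset_subset_vadd_finset (h.1 p hp)
  · have hinj : Function.Injective (g +ᵥ · : G → G) := add_right_injective g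
    rw [coe_vadd_finset, ← Set.image_vadd, hinj.injOn.pairwiseDisjoint_image]
    intro p hp q hq hpq
    simp only [Function.comp_apply, vadd_eq_add, add_vadd, ← disjoint_coe, coe_vadd_finset,
      Set.disjoint_vadd_set]
    exact_mod_cast h.2 hp hq hpq

lemma packingNumber_vadd (g : G) (E : Finset G) :
    packingNumber S (g +ᵥ E) = packingNumber S E := by
  unfold packingNumber
  congr 1
  ext n
  constructor
  · rintro ⟨P, hP, rfl⟩
    exact ⟨-g +ᵥ P, by simpa using hP.vadd (-g), card_vadd_finset _ _⟩
  · rintro ⟨P, hP, rfl⟩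
    exact ⟨g +ᵥ P, hP.vadd g, card_vadd_finset _ _⟩

lemma packingNumber_le_card (hS : S.Nonempty) (E : Finset G) : packingNumber S E ≤ E.card :=
  (Nat.le_mul_of_pos_right _ hS.card_pos).trans (packingNumber_mul_card_le hS E)

lemma packingDefect_nonneg (hS : S.Nonempty) (E : Finset G) : 0 ≤ packingDefect S E := by
  rw [packingDefect, sub_nonneg]
  exact_mod_cast packingNumber_le_card hS E

lemma packingDefect_mono (hS : S.Nonempty) (hEF : E ⊆ F) :
    packingDefect S E ≤ packingDefect S F := by
  have hle : (packingNumber S F : ℝ) ≤ packingNumber S E + (F \ E).card := by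
    exact_mod_cast packingNumber_le_add_card_sdiff hS E F
  have hcard : ((F \ E).card : ℝ) + E.card = F.card := by
    exact_mod_cast card_sdiff_add_card_eq_card hEF
  rw [packingDefect, packingDefect]
  linarith

lemma packingDefect_union_le (hS : S.Nonempty) (E F : Finset G) :
    packingDefect S (E ∪ F) ≤ packingDefect S E + packingDefect S F := by
  have hle : (packingNumber S E : ℝ) + packingNumber S F ≤
      packingNumber S (E ∪ F) + (E ∩ F).card := by
    exact_mod_cast packingNumber_add_packingNumber_le hS E F
  have hcard : ((E ∪ F).card : ℝ) + (E ∩ F).card = E.card + F.card := by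
    exact_mod_cast card_union_add_card_inter E F
  rw [packingDefect, packingDefect, packingDefect]
  linarith

lemma packingDefect_vadd (g : G) (E : Finset G) :
    packingDefect S (g +ᵥ E) = packingDefect S E := by
  rw [packingDefect, packingDefect, card_vadd_finset, packingNumber_vadd]

lemma one_sub_inv_card_le_packingDefect_div_card (hS : S.Nonempty) (hE : E.Nonempty) :
    1 - (S.card : ℝ)⁻¹ ≤ packingDefect S E / E.card := by
  have hSpos : (0 : ℝ) < S.card := by exact_mod_cast hS.card_pos
  have hEpos : (0 : ℝ) < E.card := by exact_mod_cast hE.card_pos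
  have hle : (packingNumber S E : ℝ) * S.card ≤ E.card := by
    exact_mod_cast packingNumber_mul_card_le hS E
  rw [le_div_iff₀ hEpos, packingDefect, sub_mul, one_mul, sub_le_sub_iff_left,
    le_inv_mul_iff₀ hSpos]
  linarith

lemma iInf_packingDefect_div_card (hS : S.Nonempty) :
    ⨅ E : {E : Finset G // E.Nonempty}, packingDefect S E.1 / E.1.card = 1 - (S.card : ℝ)⁻¹ := by
  have hself : packingDefect S S / S.card = 1 - (S.card : ℝ)⁻¹ := by
    have hSpos : (S.card : ℝ) ≠ 0 := by exact_mod_cast hS.card_pos.ne'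
    rw [packingDefect, packingNumber_self hS, sub_div, div_self hSpos, Nat.cast_one, one_div]
  have : Nonempty {E : Finset G // E.Nonempty} := ⟨⟨S, hS⟩⟩
  have hbdd : BddBelow (Set.range fun E : {E : Finset G // E.Nonempty} =>
      packingDefect S E.1 / E.1.card) :=
    ⟨0, Set.forall_mem_range.mpr fun E =>
      div_nonneg (packingDefect_nonneg hS _) E.1.card.cast_nonneg⟩
  exact le_antisymm (hself ▸ ciInf_le hbdd ⟨S, hS⟩)
    (le_ciInf fun E => one_sub_inv_card_le_packingDefect_div_card hS E.2)

end Packing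

lemma mem_vadd_one_two_four {p a : ℤ} :
    a ∈ p +ᵥ ({1, 2, 4} : Finset ℤ) ↔ a = p + 1 ∨ a = p + 2 ∨ a = p + 4 := by
  simp [mem_vadd_finset, eq_comm]

lemma mem_vadd_Icc_one_four {p a : ℤ} : a ∈ p +ᵥ Icc (1 : ℤ) 4 ↔ p + 1 ≤ a ∧ a ≤ p + 4 := by
  simp only [mem_vadd_finset, mem_Icc, vadd_eq_add]
  constructor
  · rintro ⟨x, hx, rfl⟩
    omega
  · intro ha
    exact ⟨a - p, by omega, by omega⟩

/-- Translates of `{1, 2, 4}` at distance `1`, `2` or `3` overlap, so disjoint ones are at least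
`4` apart. -/
lemma disjoint_vadd_Icc_of_disjoint_vadd {p q : ℤ}
    (h : Disjoint (p +ᵥ ({1, 2, 4} : Finset ℤ)) (q +ᵥ ({1, 2, 4} : Finset ℤ))) :
    Disjoint (p +ᵥ Icc (1 : ℤ) 4) (q +ᵥ Icc (1 : ℤ) 4) := by
  have h1 := disjoint_left.mp h (mem_vadd_one_two_four.mpr (Or.inl rfl))
  have h2 := disjoint_left.mp h (mem_vadd_one_two_four.mpr (Or.inr (Or.inl rfl)))
  have h4 := disjoint_left.mp h (mem_vadd_one_two_four.mpr (Or.inr (Or.inr rfl)))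
  rw [mem_vadd_one_two_four] at h1 h2 h4
  refine disjoint_left.mpr fun a ha hb => ?_
  rw [mem_vadd_Icc_one_four] at ha hb
  omega

lemma packingNumber_Icc (n : ℕ) : packingNumber {1, 2, 4} (Icc (1 : ℤ) n) = n / 4 := by
  have hS : ({1, 2, 4} : Finset ℤ).Nonempty := insert_nonempty _ _
  apply le_antisymm
  · obtain ⟨P, hP, hcard⟩ := exists_isPacking_card_eq hS (Icc (1 : ℤ) n)
    -- The hulls `p + [1, 4]` of the tiles are disjoint and lie in `[1, n]`.
    have hhull : IsPacking (Icc 1 4) (Icc (1 : ℤ) n) P := by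
      refine ⟨fun p hp a ha => ?_, fun p hp q hq hpq =>
        disjoint_vadd_Icc_of_disjoint_vadd (hP.2 hp hq hpq)⟩
      have h1 := hP.1 p hp (mem_vadd_one_two_four.mpr (Or.inl rfl))
      have h4 := hP.1 p hp (mem_vadd_one_two_four.mpr (Or.inr (Or.inr rfl)))
      rw [mem_vadd_Icc_one_four] at ha
      rw [mem_Icc] at h1 h4 ⊢
      omega
    have hbound := hhull.card_mul_card_le
    simp only [Int.card_Icc, add_sub_cancel_right, Int.toNat_natCast, Int.reduceToNat] at hbound
    omega
  · have hpacking : IsPacking {1, 2, 4} (Icc (1 : ℤ) n)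
        ((range (n / 4)).image fun k : ℕ => 4 * (k : ℤ)) := by
      refine ⟨fun p hp a ha => ?_, fun p hp q hq hpq => disjoint_left.mpr fun a ha hb => ?_⟩
      · obtain ⟨k, hk, rfl⟩ := mem_image.mp hp
        rw [mem_range] at hk
        rw [mem_vadd_one_two_four] at ha
        rw [mem_Icc]
        omega
      · obtain ⟨k, -, rfl⟩ := mem_image.mp hp
        obtain ⟨l, -, rfl⟩ := mem_image.mp hq
        rw [mem_vadd_one_two_four] at ha hb
        omega
    have hle := hpacking.card_le_packingNumber hS
    rwa [card_image_of_injective _ fun k l hkl => by omega, card_range] at hle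

lemma packingDefect_Icc (n : ℕ) :
    packingDefect {1, 2, 4} (Icc (1 : ℤ) n) = n - ((n / 4 : ℕ) : ℝ) := by
  rw [packingDefect, packingNumber_Icc, Int.card_Icc]
  simp

lemma tendsto_packingDefect_Icc_div :
    Tendsto (fun n : ℕ => packingDefect {1, 2, 4} (Icc (1 : ℤ) n) / n) atTop (𝓝 (3 / 4)) := by
  have hquarter : Tendsto (fun n : ℕ => ((n / 4 : ℕ) : ℝ) / n) atTop (𝓝 (1 / 4)) := by
    refine ((tendsto_nat_floor_mul_div_atTop (R := ℝ) (a := 1 / 4) (by norm_num)).comp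
      tendsto_natCast_atTop_atTop).congr fun n => ?_
    simp [← Nat.floor_div_eq_div (K := ℝ), div_eq_inv_mul]
  have hlim := (tendsto_const_nhds (x := (1 : ℝ))).sub hquarter
  norm_num at hlim
  refine hlim.congr' ?_
  filter_upwards [eventually_ge_atTop 1] with n hn
  rw [packingDefect_Icc, sub_div, div_self (by positivity)]

end TranslatePacking

open TranslatePacking in
/-- There is a monotone, non-negative, `ℤ`-invariant, subadditive
function `f` on finite subsets of `ℤ` whose Følner averages `f({1,…,n})/n` converge
to a limit strictly greater than `inf f(E)/|E|`; concretely one can arrange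
`f({1,…,4n}) = 3n` and `inf f(E)/|E| = 2/3`. -/
theorem stmt4 :
    ∃ f : Finset ℤ → ℝ,
      (∀ E F : Finset ℤ, E ⊆ F → f E ≤ f F) ∧
      (∀ E : Finset ℤ, 0 ≤ f E) ∧
      (∀ (E : Finset ℤ) (g : ℤ), f (E.image (fun x => x + g)) = f E) ∧
      (∀ E F : Finset ℤ, f (E ∪ F) ≤ f E + f F) ∧
      (∀ n : ℕ, 1 ≤ n → f (Finset.Icc (1 : ℤ) (4 * n)) = 3 * n) ∧
      (⨅ E : {E : Finset ℤ // E.Nonempty}, f E.1 / E.1.card) = 2 / 3 ∧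
      ∃ L : ℝ,
        Filter.Tendsto (fun n : ℕ => f (Finset.Icc (1 : ℤ) n) / n) Filter.atTop (nhds L) ∧
        (⨅ E : {E : Finset ℤ // E.Nonempty}, f E.1 / E.1.card) < L := by
  have hS : ({1, 2, 4} : Finset ℤ).Nonempty := insert_nonempty _ _
  have hinf : ⨅ E : {E : Finset ℤ // E.Nonempty},
      packingDefect {1, 2, 4} E.1 / E.1.card = 2 / 3 := by
    rw [iInf_packingDefect_div_card hS]
    norm_num
  refine ⟨packingDefect {1, 2, 4}, fun E F => packingDefect_mono hS, packingDefect_nonneg hS,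
    fun E g => ?_, packingDefect_union_le hS, fun n _ => ?_, hinf, 3 / 4,
    tendsto_packingDefect_Icc_div, by rw [hinf]; norm_num⟩
  · have himage : E.image (· + g) = g +ᵥ E := by
      simp only [vadd_finset_def, vadd_eq_add, add_comm g]
    rw [himage, packingDefect_vadd]
  · have h := packingDefect_Icc (4 * n)
    push_cast at h
    rw [h, Nat.mul_div_cancel_left n (by norm_num)]
    ring
end

section
/- With S = {1,2,4} ⊂ ℤ and f(E) = min{|E| − |F| : F finite, {p+S : p ∈ F} pairwise disjoint subsets of E}, for every n ∈ ℕ one has f({1, 2, …, 4n}) = 3n. -/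
/-!
The blocks `4k + S = {4k+1, 4k+2, 4k+4}`, `0 ≤ k < n`, are disjoint and fit
in `{1, …, 4n}`, so `f ≤ 4n − n`. Conversely two distinct translates `p + S`, `q + S` with
`|p − q| ≤ 3` always meet, so in a disjoint family `p ↦ ⌊p / 4⌋` is injective; as every
admissible `p` lies in `[0, 4n − 4]`, at most `n` translates fit, so `f ≥ 4n − n`.
-/

/-- The set `S = {1,2,4} ⊆ ℤ`. -/
def Sset : Finset ℤ := {1, 2, 4}

/-- `f(E) = min { |E| − |F| : F finite, the translates p+S (p ∈ F) are pairwise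
disjoint subsets of E }`. -/
noncomputable def fmin (E : Finset ℤ) : ℕ :=
  sInf {m : ℕ | ∃ F : Finset ℤ,
    (∀ p ∈ F, Sset.image (fun s => p + s) ⊆ E) ∧
    (∀ p ∈ F, ∀ q ∈ F, p ≠ q →
      Disjoint (Sset.image (fun s => p + s)) (Sset.image (fun s => q + s))) ∧
    m = E.card - F.card}

def IsPacking (E F : Finset ℤ) : Prop :=
  (∀ p ∈ F, Sset.image (fun s => p + s) ⊆ E) ∧
    ∀ p ∈ F, ∀ q ∈ F, p ≠ q →
      Disjoint (Sset.image (fun s => p + s)) (Sset.image (fun s => q + s))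

lemma mem_Sset_image_add_iff {p x : ℤ} :
    x ∈ Sset.image (fun s => p + s) ↔ x = p + 1 ∨ x = p + 2 ∨ x = p + 4 := by
  simp only [Sset, Finset.mem_image, Finset.mem_insert, Finset.mem_singleton]
  constructor
  · rintro ⟨s, hs, rfl⟩
    omega
  · rintro (rfl | rfl | rfl)
    exacts [⟨1, by norm_num⟩, ⟨2, by norm_num⟩, ⟨4, by norm_num⟩]

lemma not_disjoint_Sset_image_add {p q : ℤ} (hpq : p < q) (hqp : q ≤ p + 3) :
    ¬Disjoint (Sset.image (fun s => p + s)) (Sset.image (fun s => q + s)) := by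
  rw [Finset.not_disjoint_iff]
  obtain h | h : q = p + 1 ∨ p + 2 ≤ q := by omega
  · exact ⟨p + 2, mem_Sset_image_add_iff.2 (by omega), mem_Sset_image_add_iff.2 (by omega)⟩
  · exact ⟨p + 4, mem_Sset_image_add_iff.2 (by omega), mem_Sset_image_add_iff.2 (by omega)⟩

namespace IsPacking

variable {E F : Finset ℤ}

lemma injOn_ediv_four (hF : IsPacking E F) : Set.InjOn (· / 4) (F : Set ℤ) := by
  intro p hp q hq hdiv
  by_contra hne
  obtain hlt | hlt := lt_or_gt_of_ne hne
  · exact not_disjoint_Sset_image_add hlt (by simp only at hdiv; omega) (hF.2 p hp q hq hne)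
  · exact not_disjoint_Sset_image_add hlt (by simp only at hdiv; omega)
      (hF.2 q hq p hp (Ne.symm hne))

lemma card_le_of_subset_Icc {n : ℕ} (hF : IsPacking (Finset.Icc 1 (4 * n)) F) :
    F.card ≤ n := by
  have hmaps : Set.MapsTo (· / 4) (F : Set ℤ) (Finset.Ico (0 : ℤ) n : Set ℤ) := by
    intro p hp
    have h1 := Finset.mem_Icc.1 (hF.1 p hp (mem_Sset_image_add_iff.2 (Or.inl rfl)))
    have h4 := Finset.mem_Icc.1 (hF.1 p hp (mem_Sset_image_add_iff.2 (Or.inr (Or.inr rfl))))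
    simp only [Finset.coe_Ico, Set.mem_Ico]
    omega
  simpa using Finset.card_le_card_of_injOn _ hmaps hF.injOn_ediv_four

end IsPacking

lemma fmin_le {E F : Finset ℤ} (hF : IsPacking E F) : fmin E ≤ E.card - F.card :=
  Nat.sInf_le ⟨F, hF.1, hF.2, rfl⟩

lemma le_fmin {E : Finset ℤ} {k : ℕ} (hbound : ∀ F, IsPacking E F → F.card ≤ k) :
    E.card - k ≤ fmin E :=
  le_csInf ⟨E.card, ∅, by simp, by simp, rfl⟩ fun _ ⟨F, hsub, hdisj, hm⟩ =>
    hm ▸ Nat.sub_le_sub_left (hbound F ⟨hsub, hdisj⟩) _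

lemma isPacking_image_four_mul_range (n : ℕ) :
    IsPacking (Finset.Icc 1 (4 * n)) ((Finset.range n).image (fun k : ℕ => 4 * (k : ℤ))) := by
  simp only [IsPacking, Finset.mem_image, Finset.mem_range]
  constructor
  · rintro _ ⟨k, hk, rfl⟩ x hx
    rw [mem_Sset_image_add_iff] at hx
    rw [Finset.mem_Icc]
    omega
  · rintro _ ⟨k, -, rfl⟩ _ ⟨j, -, rfl⟩ hkj
    rw [Finset.disjoint_left]
    intro x hx hx'
    rw [mem_Sset_image_add_iff] at hx hx'
    omega

/-- `f({1,2,…,4n}) = 3n` for every `n ∈ ℕ`. -/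
theorem stmt5 (n : ℕ) : fmin (Finset.Icc (1 : ℤ) (4 * n)) = 3 * n := by
  have hcard : (Finset.Icc (1 : ℤ) (4 * n)).card - n = 3 * n := by
    rw [Int.card_Icc]
    omega
  have hblocks : ((Finset.range n).image (fun k : ℕ => 4 * (k : ℤ))).card = n := by
    rw [Finset.card_image_of_injective _ (fun a b h => by omega), Finset.card_range]
  refine le_antisymm ?_ ?_
  · simpa only [hblocks, hcard] using fmin_le (isPacking_image_four_mul_range n)
  · simpa only [hcard] using le_fmin (k := n) fun F hF => hF.card_le_of_subset_Icc
end

section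
/- Let (X, ℬ, μ) be a purely atomic probability space and {α_j : j ∈ ℕ} a sequence of finite measurable partitions of X. Then the set of x ∈ X such that (1/n)·log μ(⋂_{j=1}^{n} α_j(x)) → 0 as n → ∞ has μ-measure 1. -/
open MeasureTheory

/-- A probability space is purely atomic: there is a countable family of measurable
sets of full total measure on each of which every measurable subset has either zero
or full measure. -/
def PurelyAtomic {X : Type*} [MeasurableSpace X] (μ : Measure X) : Prop :=
  ∃ D : ℕ → Set X, (∀ i, MeasurableSet (D i)) ∧ μ (⋃ i, D i) = 1 ∧
    ∀ i, ∀ s : Set X, s ⊆ D i → MeasurableSet s → μ s = 0 ∨ μ s = μ (D i)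

/-- On a purely atomic probability space, for any sequence of finite
measurable partitions `α_j` (encoded as measurable maps `P j : X → ℕ` with finite
range, the atom of `x` being `(P j)⁻¹' {P j x}`), the set of points `x` where
`(1/n)·log μ(⋂_{j<n} α_j(x)) → 0` has full measure. -/
theorem stmt7 {X : Type*} [MeasurableSpace X] (μ : Measure X) [IsProbabilityMeasure μ]
    (hatomic : PurelyAtomic μ)
    (P : ℕ → X → ℕ) (hmeas : ∀ j, Measurable (P j))
    (hfin : ∀ j, (Set.range (P j)).Finite) :
    μ {x : X | Filter.Tendsto
        (fun n : ℕ => (1 / (n : ℝ)) *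
          Real.log ((μ (⋂ j ∈ Finset.range n, (P j) ⁻¹' {P j x})).toReal))
        Filter.atTop (nhds 0)} = 1 := by
  classical
  obtain ⟨D, hDm, hDfull, hDatom⟩ := hatomic
  set A : ℕ → X → Set X := fun j x => (P j) ⁻¹' {P j x} with hA
  have hAm : ∀ j x, MeasurableSet (A j x) := fun j x => (hmeas j) (measurableSet_singleton _)
  set Bad : ℕ → Set X := fun i => D i ∩ ⋃ j, {x | μ (A j x ∩ D i) = 0} with hBadDef
  have hBadNull : ∀ i, μ (Bad i) = 0 := by
    intro i
    have h1 : Bad i ⊆ ⋃ j, (D i ∩ {x | μ (A j x ∩ D i) = 0}) := by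
      rintro x ⟨hx, hxu⟩
      simp only [Set.mem_iUnion] at hxu ⊢
      obtain ⟨j, hj⟩ := hxu
      exact ⟨j, hx, hj⟩
    refine measure_mono_null h1 (measure_iUnion_null fun j => ?_)
    have h2 : D i ∩ {x | μ (A j x ∩ D i) = 0} ⊆
        ⋃ k ∈ (hfin j).toFinset.filter (fun k => μ ((P j) ⁻¹' {k} ∩ D i) = 0),
          ((P j) ⁻¹' {k} ∩ D i) := by
      rintro x ⟨hx, hx0⟩
      simp only [Set.mem_iUnion, Finset.mem_filter, Set.Finite.mem_toFinset]
      exact ⟨P j x, ⟨⟨x, rfl⟩, hx0⟩, rfl, hx⟩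
    refine measure_mono_null h2 ?_
    refine (measure_biUnion_null_iff ((hfin j).toFinset.filter _).countable_toSet).mpr ?_
    intro k hk
    exact (Finset.mem_filter.mp hk).2
  have key : (⋃ i, D i) \ (⋃ i, Bad i) ⊆ {x : X | Filter.Tendsto
        (fun n : ℕ => (1 / (n : ℝ)) *
          Real.log ((μ (⋂ j ∈ Finset.range n, (P j) ⁻¹' {P j x})).toReal))
        Filter.atTop (nhds 0)} := by
    rintro x ⟨hxU, hxB⟩
    obtain ⟨i, hxi⟩ := Set.mem_iUnion.mp hxU
    have hnotbad : ∀ j, μ (A j x ∩ D i) ≠ 0 := by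
      intro j h0
      exact hxB (Set.mem_iUnion.mpr ⟨i, hxi, Set.mem_iUnion.mpr ⟨j, h0⟩⟩)
    have hgood : ∀ j, μ (A j x ∩ D i) = μ (D i) := by
      intro j
      rcases hDatom i _ Set.inter_subset_right ((hAm j x).inter (hDm i)) with h | h
      · exact absurd h (hnotbad j)
      · exact h
    have hDne : μ (D i) ≠ 0 := by
      intro h
      exact hnotbad 0 (by rw [hgood 0, h])
    have hlow : ∀ n, μ (D i) ≤ μ (⋂ j ∈ Finset.range n, A j x) := by
      intro n
      set T := ⋂ j ∈ Finset.range n, A j x with hT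
      have hdiff : μ (D i \ T) = 0 := by
        have hsub : D i \ T ⊆ ⋃ j ∈ Finset.range n, (D i \ A j x) := by
          intro y hy
          simp only [hT, Set.mem_diff, Set.mem_iInter, not_forall, Set.mem_iUnion] at hy ⊢
          obtain ⟨hyD, j, hj, hyA⟩ := hy
          exact ⟨j, hj, hyD, hyA⟩
        refine measure_mono_null hsub
          ((measure_biUnion_null_iff (Finset.range n).countable_toSet).mpr fun j _ => ?_)
        have : D i \ A j x = D i \ (A j x ∩ D i) := by
          ext y; simp only [Set.mem_diff, Set.mem_inter_iff]; tauto
        rw [this, measure_diff Set.inter_subset_right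
          ((hAm j x).inter (hDm i)).nullMeasurableSet (measure_ne_top μ _), hgood j, tsub_self]
      calc μ (D i) = μ ((D i ∩ T) ∪ (D i \ T)) := by rw [Set.inter_union_diff]
        _ ≤ μ (D i ∩ T) + μ (D i \ T) := measure_union_le _ _
        _ = μ (D i ∩ T) := by rw [hdiff, add_zero]
        _ ≤ μ T := measure_mono Set.inter_subset_right
    set c : ℝ := (μ (D i)).toReal with hc
    have hcpos : 0 < c := ENNReal.toReal_pos hDne (measure_ne_top μ _)
    set m : ℕ → ℝ := fun n => (μ (⋂ j ∈ Finset.range n, A j x)).toReal with hm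
    have hmc : ∀ n, c ≤ m n := fun n => ENNReal.toReal_mono (measure_ne_top μ _) (hlow n)
    have hm1 : ∀ n, m n ≤ 1 := by
      intro n
      have h := ENNReal.toReal_mono ENNReal.one_ne_top
        (prob_le_one (μ := μ) (s := ⋂ j ∈ Finset.range n, A j x))
      rwa [ENNReal.toReal_one] at h
    rw [Set.mem_setOf_eq]
    have hC : Filter.Tendsto (fun n : ℕ => (1 / (n : ℝ)) * (-Real.log c))
        Filter.atTop (nhds 0) := by
      simpa using tendsto_one_div_atTop_nhds_zero_nat.mul_const (-Real.log c)
    refine squeeze_zero_norm (fun n => ?_) hC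
    have h1n : 0 ≤ 1 / (n : ℝ) := by positivity
    rw [norm_mul, Real.norm_eq_abs, Real.norm_eq_abs, abs_of_nonneg h1n]
    refine mul_le_mul_of_nonneg_left ?_ h1n
    have hlog0 : Real.log (m n) ≤ 0 := Real.log_nonpos ENNReal.toReal_nonneg (hm1 n)
    rw [abs_of_nonpos hlog0]
    have : Real.log c ≤ Real.log (m n) := Real.log_le_log hcpos (hmc n)
    linarith
  have h1 : μ ((⋃ i, D i) \ ⋃ i, Bad i) = 1 := by
    rw [measure_diff_null (measure_iUnion_null hBadNull), hDfull]
  refine le_antisymm prob_le_one ?_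
  calc (1 : ENNReal) = μ ((⋃ i, D i) \ ⋃ i, Bad i) := h1.symm
    _ ≤ _ := measure_mono key
end

section
/- Let (X, ℬ, μ) be a purely atomic probability space, k ∈ ℕ, and {α_j : j ∈ ℕ} a sequence of finite measurable partitions of X each with at most k atoms. Then (1/n)·H_μ(⋁_{j=1}^{n} α_j) → 0 as n → ∞, where H_μ(β) = −∑_{B∈β} μ(B) log μ(B) denotes Shannon entropy of the partition β. -/
open MeasureTheory

/-- Shannon entropy of the join `⋁_{j<n} α_j` of partitions encoded as measurable
maps `P j : X → Fin k`: the cells of the join are the joint preimages. -/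
noncomputable def joinEntropy {X : Type*} [MeasurableSpace X] (μ : Measure X)
    {k : ℕ} (P : ℕ → X → Fin k) (n : ℕ) : ℝ :=
  ∑ c : Fin n → Fin k,
    Real.negMulLog ((μ (⋂ j : Fin n, (P j) ⁻¹' {c j})).toReal)

/-!
On a purely atomic space each partition is almost surely constant on each atom, so every cell of
`⋁_{j<n} α_j` is, up to a null set, a union of atoms. Fix `N`. The first `N` atoms contribute at
most `N` to the entropy whatever `n` is, while the remaining atoms, of total mass `t_N → 0`, are
spread over at most `kⁿ` cells and by concavity of `x ↦ -x log x` contribute at most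
`1 + t_N · n log k`. Hence `(1/n) H(⋁_{j<n} α_j) ≤ (N + 1)/n + t_N log k` for every `N`.
-/

namespace Real

lemma negMulLog_le_one {x : ℝ} (hx : 0 ≤ x) : negMulLog x ≤ 1 :=
  (negMulLog_le_one_sub_self hx).trans (by linarith)

lemma negMulLog_add_le {a b : ℝ} (ha : 0 ≤ a) (hb : 0 ≤ b) :
    negMulLog (a + b) ≤ negMulLog a + negMulLog b := by
  rcases ha.eq_or_lt with rfl | ha'
  · simp
  rcases hb.eq_or_lt with rfl | hb'
  · simp
  have h1 : log a ≤ log (a + b) := log_le_log ha' (by linarith)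
  have h2 : log b ≤ log (a + b) := log_le_log hb' (by linarith)
  simp only [negMulLog, neg_mul]
  nlinarith

lemma negMulLog_sum_le {ι : Type*} (s : Finset ι) {x : ι → ℝ} (hx : ∀ i ∈ s, 0 ≤ x i) :
    negMulLog (∑ i ∈ s, x i) ≤ ∑ i ∈ s, negMulLog (x i) :=
  Finset.le_sum_of_subadditive_on_pred negMulLog (0 ≤ ·) (by simp)
    (fun _ _ => negMulLog_add_le) (fun _ _ => add_nonneg) x hx

/-- Jensen's inequality for the concave function `negMulLog`. -/
lemma sum_negMulLog_le {ι : Type*} [Fintype ι] [Nonempty ι] {x : ι → ℝ} (hx : ∀ c, 0 ≤ x c) :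
    ∑ c, negMulLog (x c) ≤ negMulLog (∑ c, x c) + (∑ c, x c) * log (Fintype.card ι) := by
  set m : ℝ := (Fintype.card ι : ℝ)
  have hm : 0 < m := by simp [m, Fintype.card_pos]
  have jensen := concaveOn_negMulLog.le_map_sum (t := Finset.univ) (w := fun _ : ι => m⁻¹)
    (p := x) (fun _ _ => by positivity) (by simp [m]) (fun c _ => hx c)
  simp only [smul_eq_mul, ← Finset.mul_sum, negMulLog_mul] at jensen
  have hinv : negMulLog m⁻¹ = m⁻¹ * log m := by simp [negMulLog, log_inv]
  rw [hinv] at jensen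
  calc ∑ c, negMulLog (x c) = m * (m⁻¹ * ∑ c, negMulLog (x c)) := by field_simp
    _ ≤ m * ((∑ c, x c) * (m⁻¹ * log m) + m⁻¹ * negMulLog (∑ c, x c)) := by gcongr
    _ = negMulLog (∑ c, x c) + (∑ c, x c) * log m := by field_simp; ring

end Real

open Real Filter Topology Function

section FiberEntropy

variable {ι : Type*} [Fintype ι] [DecidableEq ι] {p : ℕ → ℝ}

lemma Summable.ite_of_nonneg (hp : ∀ i, 0 ≤ p i) (hs : Summable p) (q : ℕ → Prop)
    [DecidablePred q] : Summable fun i => if q i then p i else 0 :=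
  hs.of_nonneg_of_le (fun i => ite_nonneg (hp i) le_rfl) (fun i => by split_ifs <;> simp [hp])

lemma sum_negMulLog_finsetSum_ite_le_card (hp : ∀ i, 0 ≤ p i) (g : ℕ → ι) (s : Finset ℕ) :
    ∑ c, negMulLog (∑ i ∈ s, if g i = c then p i else 0) ≤ s.card := by
  calc ∑ c, negMulLog (∑ i ∈ s, if g i = c then p i else 0)
      ≤ ∑ c, ∑ i ∈ s, negMulLog (if g i = c then p i else 0) :=
        Finset.sum_le_sum fun c _ => negMulLog_sum_le s fun i _ => ite_nonneg (hp i) le_rfl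
    _ = ∑ i ∈ s, negMulLog (p i) := by
        rw [Finset.sum_comm]
        simp [apply_ite negMulLog]
    _ ≤ ∑ _i ∈ s, (1 : ℝ) := Finset.sum_le_sum fun i _ => negMulLog_le_one (hp i)
    _ = s.card := by simp

lemma sum_negMulLog_tsum_ite_le_one_add_mul_log_card (hp : ∀ i, 0 ≤ p i) (hs : Summable p)
    (g : ℕ → ι) :
    ∑ c, negMulLog (∑' i, if g i = c then p i else 0) ≤
      1 + (∑' i, p i) * log (Fintype.card ι) := by
  have : Nonempty ι := ⟨g 0⟩
  have htotal : ∑ c, ∑' i, (if g i = c then p i else 0) = ∑' i, p i := by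
    rw [← Summable.tsum_finsetSum fun c _ => hs.ite_of_nonneg hp (g · = c)]
    simp
  have := sum_negMulLog_le (x := fun c => ∑' i, if g i = c then p i else 0)
    fun c => tsum_nonneg fun i => ite_nonneg (hp i) le_rfl
  rw [htotal] at this
  linarith [negMulLog_le_one (x := ∑' i, p i) (tsum_nonneg hp)]

lemma sum_negMulLog_tsum_ite_le_add_tail (hp : ∀ i, 0 ≤ p i) (hs : Summable p) (g : ℕ → ι)
    (N : ℕ) :
    ∑ c, negMulLog (∑' i, if g i = c then p i else 0) ≤
      N + 1 + (∑' i, p (i + N)) * log (Fintype.card ι) := by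
  have hsplit : ∀ c, ∑' i, (if g i = c then p i else 0) =
      (∑ i ∈ Finset.range N, if g i = c then p i else 0) +
        ∑' i, if g (i + N) = c then p (i + N) else 0 := fun c =>
    ((hs.ite_of_nonneg hp (g · = c)).sum_add_tsum_nat_add N).symm
  have hhead := sum_negMulLog_finsetSum_ite_le_card hp g (Finset.range N)
  have htail := sum_negMulLog_tsum_ite_le_one_add_mul_log_card (fun i => hp (i + N))
    ((summable_nat_add_iff N).2 hs) (fun i => g (i + N))
  calc ∑ c, negMulLog (∑' i, if g i = c then p i else 0)
      ≤ ∑ c, (negMulLog (∑ i ∈ Finset.range N, if g i = c then p i else 0) +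
          negMulLog (∑' i, if g (i + N) = c then p (i + N) else 0)) := by
        refine Finset.sum_le_sum fun c _ => ?_
        rw [hsplit c]
        exact negMulLog_add_le (Finset.sum_nonneg fun i _ => ite_nonneg (hp i) le_rfl)
          (tsum_nonneg fun i => ite_nonneg (hp _) le_rfl)
    _ ≤ N + (1 + (∑' i, p (i + N)) * log (Fintype.card ι)) := by
        rw [Finset.sum_add_distrib]
        exact add_le_add (by simpa using hhead) htail
    _ = _ := by ring

end FiberEntropy

section Atoms

variable {X : Type*} [MeasurableSpace X] {μ : Measure X}

lemma PurelyAtomic.exists_disjoint_atoms [IsProbabilityMeasure μ] (hμ : PurelyAtomic μ) :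
    ∃ E : ℕ → Set X, (∀ i, MeasurableSet (E i)) ∧ Pairwise (Disjoint on E) ∧
      μ (⋃ i, E i)ᶜ = 0 ∧ ∀ i, ∀ s ⊆ E i, MeasurableSet s → μ s = 0 ∨ μ s = μ (E i) := by
  obtain ⟨D, hDm, hD1, hDatom⟩ := hμ
  have hEm : ∀ i, MeasurableSet (disjointed D i) := MeasurableSet.disjointed hDm
  refine ⟨disjointed D, hEm, disjoint_disjointed D, ?_, fun i s hs hsm => ?_⟩
  · rwa [prob_compl_eq_zero_iff (MeasurableSet.iUnion hEm), iUnion_disjointed]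
  · have hED := disjointed_subset D i
    refine (hDatom i s (hs.trans hED) hsm).imp_right fun h => ?_
    exact le_antisymm (measure_mono hs) (h ▸ measure_mono hED)

variable {ι : Type*} [MeasurableSpace ι] [MeasurableSingletonClass ι] [Countable ι] [Nonempty ι]

lemma exists_measure_diff_preimage_singleton_eq_zero [IsFiniteMeasure μ] {A : Set X}
    (hA : ∀ s ⊆ A, MeasurableSet s → μ s = 0 ∨ μ s = μ A) (hAm : MeasurableSet A) {Q : X → ι}
    (hQ : Measurable Q) : ∃ c, μ (A \ Q ⁻¹' {c}) = 0 := by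
  by_cases h0 : μ A = 0
  · exact ⟨Classical.arbitrary ι, measure_mono_null Set.sdiff_subset h0⟩
  have hfull : ∃ c, μ (A ∩ Q ⁻¹' {c}) = μ A := by
    by_contra! h
    have hcov : A ⊆ ⋃ c, A ∩ Q ⁻¹' {c} := fun x hx => Set.mem_iUnion.2 ⟨Q x, hx, rfl⟩
    refine h0 (measure_mono_null hcov (measure_iUnion_null fun c => ?_))
    exact (hA _ Set.inter_subset_left (hAm.inter (hQ (measurableSet_singleton c)))).resolve_right
      (h c)
  obtain ⟨c, hc⟩ := hfull
  refine ⟨c, ?_⟩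
  rw [← Set.sdiff_self_inter, measure_sdiff Set.inter_subset_left
    (hAm.inter (hQ (measurableSet_singleton c))).nullMeasurableSet (measure_ne_top μ _), hc,
    tsub_self]

/-- `g i` is the almost sure value of `Q` on the atom `E i`. -/
lemma exists_measureReal_preimage_singleton_eq_tsum [IsFiniteMeasure μ] [DecidableEq ι]
    {E : ℕ → Set X} (hEm : ∀ i, MeasurableSet (E i)) (hdisj : Pairwise (Disjoint on E))
    (hcover : μ (⋃ i, E i)ᶜ = 0)
    (hatom : ∀ i, ∀ s ⊆ E i, MeasurableSet s → μ s = 0 ∨ μ s = μ (E i))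
    {Q : X → ι} (hQ : Measurable Q) :
    ∃ g : ℕ → ι, ∀ c, μ.real (Q ⁻¹' {c}) = ∑' i, if g i = c then μ.real (E i) else 0 := by
  choose g hg using fun i => exists_measure_diff_preimage_singleton_eq_zero (hatom i) (hEm i) hQ
  refine ⟨g, fun c => ?_⟩
  have hcell : ∀ i, μ (E i ∩ Q ⁻¹' {c}) = if g i = c then μ (E i) else 0 := by
    intro i
    split_ifs with h
    · exact measure_inter_conull' (h ▸ hg i)
    · refine measure_mono_null (fun x (hx : x ∈ E i ∩ Q ⁻¹' {c}) => ?_) (hg i)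
      exact ⟨hx.1, fun hx' : Q x = g i => h (hx'.symm.trans hx.2)⟩
  have hsum : μ (Q ⁻¹' {c}) = ∑' i, μ (E i ∩ Q ⁻¹' {c}) := by
    rw [← measure_inter_conull hcover, Set.inter_iUnion, measure_iUnion
      (fun i j hij => (hdisj hij).mono Set.inter_subset_right Set.inter_subset_right)
      (fun i => (hQ (measurableSet_singleton c)).inter (hEm i))]
    simp only [Set.inter_comm]
  rw [measureReal_def, hsum, ENNReal.tsum_toReal_eq fun i => measure_ne_top μ _]
  refine tsum_congr fun i => ?_
  rw [hcell]
  split_ifs <;> simp [measureReal_def]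

end Atoms

lemma joinEntropy_nonneg {X : Type*} [MeasurableSpace X] (μ : Measure X) [IsProbabilityMeasure μ]
    {k : ℕ} (P : ℕ → X → Fin k) (n : ℕ) : 0 ≤ joinEntropy μ P n :=
  Finset.sum_nonneg fun _ _ => negMulLog_nonneg ENNReal.toReal_nonneg measureReal_le_one

lemma tendsto_one_div_mul_atTop_nhds_zero_of_le {a C t : ℕ → ℝ} {L : ℝ} (ha : ∀ n, 0 ≤ a n)
    (hle : ∀ N n, a n ≤ C N + t N * (n * L)) (ht : Tendsto t atTop (𝓝 0)) :
    Tendsto (fun n : ℕ => 1 / (n : ℝ) * a n) atTop (𝓝 0) := by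
  refine tendsto_order.2 ⟨fun b hb => Eventually.of_forall fun n => ?_, fun ε hε => ?_⟩
  · exact hb.trans_le (mul_nonneg (by positivity) (ha n))
  have htL : Tendsto (fun N => t N * L) atTop (𝓝 0) := by simpa using ht.mul_const L
  obtain ⟨N, hN⟩ := (htL.eventually (gt_mem_nhds (half_pos hε))).exists
  filter_upwards [(tendsto_const_div_atTop_nhds_zero_nat (C N)).eventually
    (gt_mem_nhds (half_pos hε)), eventually_gt_atTop 0] with n hCn hn
  have hn' : (0 : ℝ) < n := by exact_mod_cast hn
  calc 1 / (n : ℝ) * a n ≤ 1 / n * (C N + t N * (n * L)) := by gcongr; exact hle N n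
    _ = C N / n + t N * L := by field_simp
    _ < ε / 2 + ε / 2 := by gcongr
    _ = ε := add_halves ε

/-- On a purely atomic probability space, for any sequence of finite
measurable partitions each with at most `k` atoms (encoded as measurable maps into
`Fin k`), `(1/n)·H_μ(⋁_{j<n} α_j) → 0`. -/
theorem stmt8 {X : Type*} [MeasurableSpace X] (μ : Measure X) [IsProbabilityMeasure μ]
    (hatomic : PurelyAtomic μ) (k : ℕ)
    (P : ℕ → X → Fin k) (hmeas : ∀ j, Measurable (P j)) :
    Filter.Tendsto (fun n : ℕ => (1 / (n : ℝ)) * joinEntropy μ P n)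
      Filter.atTop (nhds 0) := by
  obtain ⟨E, hEm, hdisj, hcover, hatom⟩ := hatomic.exists_disjoint_atoms
  have : Nonempty (Fin k) := ⟨P 0 (nonempty_of_isProbabilityMeasure μ).some⟩
  have hp : Summable fun i => μ.real (E i) := summable_measure_toReal hEm hdisj
  refine tendsto_one_div_mul_atTop_nhds_zero_of_le (joinEntropy_nonneg μ P) (fun N n => ?_)
    (tendsto_sum_nat_add fun i => μ.real (E i)) (C := fun N => N + 1) (L := log k)
  obtain ⟨g, hg⟩ := exists_measureReal_preimage_singleton_eq_tsum hEm hdisj hcover hatom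
    (measurable_pi_lambda (fun x (j : Fin n) => P j x) fun j => hmeas j)
  have hcells : ∀ c : Fin n → Fin k,
      ⋂ j : Fin n, P j ⁻¹' {c j} = (fun x (j : Fin n) => P j x) ⁻¹' {c} := by
    intro c; ext x; simp [funext_iff]
  calc joinEntropy μ P n = ∑ c, negMulLog (∑' i, if g i = c then μ.real (E i) else 0) := by
        simp only [joinEntropy, hcells, ← measureReal_def, hg]
    _ ≤ N + 1 + (∑' i, μ.real (E (i + N))) * log (Fintype.card (Fin n → Fin k)) :=
        sum_negMulLog_tsum_ite_le_add_tail (fun _ => measureReal_nonneg) hp g N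
    _ = N + 1 + (∑' i, μ.real (E (i + N))) * (n * log k) := by simp [Real.log_pow]
end

section
/- Let (Γ, 𝒯) be a measurable space, X a Polish space, p : Γ → X a measurable map, and α a finite partition of Γ × X into sets measurable with respect to the product σ-algebra 𝒯 × ℬ_X. Then the set ⋃_{τ∈Γ} {τ} × α_τ(p(τ)) belongs to 𝒯 × ℬ_X, where α_τ = {A_τ : A ∈ α} with A_τ = {x ∈ X : (τ,x) ∈ A} is the fiber partition of X and α_τ(x) denotes its atom containing x. -/
/-- Let `(Γ, 𝒯)` be a measurable space (satisfying the projection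
property), `X` a Polish space, `p : Γ → X` measurable, and `α` a finite partition of
`Γ × X` into product-measurable sets. Then `⋃_{τ∈Γ} {τ} × α_τ(p(τ))`, i.e. the set of
pairs `(τ, x)` such that `x` lies in the atom of the fiber partition `α_τ` containing
`p(τ)`, is product-measurable. -/
theorem stmt17 {Γ X : Type*} [MeasurableSpace Γ]
    [TopologicalSpace X] [PolishSpace X] [MeasurableSpace X] [BorelSpace X]
    (hproj : ∀ A : Set (Γ × X), MeasurableSet A → MeasurableSet (Prod.fst '' A))
    (p : Γ → X) (hp : Measurable p)
    (α : Finset (Set (Γ × X)))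
    (hmeas : ∀ A ∈ α, MeasurableSet A)
    (hcover : ⋃₀ (α : Set (Set (Γ × X))) = Set.univ)
    (hdisj : ∀ A ∈ α, ∀ B ∈ α, A ≠ B → Disjoint A B) :
    MeasurableSet {z : Γ × X | ∃ A ∈ α, (z.1, p z.1) ∈ A ∧ z ∈ A} := by
  have : {z : Γ × X | ∃ A ∈ α, (z.1, p z.1) ∈ A ∧ z ∈ A} =
      ⋃ A ∈ α, ((fun z : Γ × X => (z.1, p z.1)) ⁻¹' A ∩ A) := by
    ext z; simp [Set.mem_iUnion]; tauto
  rw [this]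
  exact MeasurableSet.biUnion α.countable_toSet fun A hA =>
    ((hmeas A hA).preimage (measurable_fst.prodMk (hp.comp measurable_fst))).inter (hmeas A hA)
end
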